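/- Given strong gross substitutes valuations, a price vector p is packing (i.e., there exist z_i ∈ D_i(p) for each buyer i with Σ_i z_i(e) ≤ b(e) for all e) if and only if there is no overdemanded set, i.e., for all S ⊆ E one has Σ_i (ρ̌_i(E) − ρ̌_i(E∖S)) ≤ b(S), where ρ̌_i is the rank function of the M-convex set of minimal preferred bundles of buyer i at prices p. -/

import Mathlib

open Finset

variable {E : Type*} [Fintype E] [DecidableEq E]

/-- Characteristic (unit) vector of an item. -/
def chi (e : E) : E → ℤ := fun f => if f = e then 1 else 0

/-- The integer box `[0, b]_ℤ` of bundles. -/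
def Box (b : E → ℤ) : Set (E → ℤ) := {z | ∀ e, 0 ≤ z e ∧ z e ≤ b e}

/-- Quasi-linear utility of a bundle at prices `p`. -/
noncomputable def util (v : (E → ℤ) → ℤ) (p : E → ℝ) (z : E → ℤ) : ℝ :=
  (v z : ℝ) - ∑ e : E, p e * (z e : ℝ)

/-- Demand set: utility-maximizing bundles in the box. -/
def Demand (b : E → ℤ) (v : (E → ℤ) → ℤ) (p : E → ℝ) : Set (E → ℤ) :=
  {z | z ∈ Box b ∧ ∀ y ∈ Box b, util v p y ≤ util v p z}

/-- Componentwise minimal preferred bundles. -/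
def MinDemand (b : E → ℤ) (v : (E → ℤ) → ℤ) (p : E → ℝ) : Set (E → ℤ) :=
  {z | z ∈ Demand b v p ∧ ∀ y ∈ Demand b v p, y ≤ z → y = z}

/-- Componentwise maximal preferred bundles. -/
def MaxDemand (b : E → ℤ) (v : (E → ℤ) → ℤ) (p : E → ℝ) : Set (E → ℤ) :=
  {z | z ∈ Demand b v p ∧ ∀ y ∈ Demand b v p, z ≤ y → y = z}

/-- M♮-concavity, equivalent to the strong gross substitutes property. -/
def MNatConcave (b : E → ℤ) (v : (E → ℤ) → ℤ) : Prop :=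
  ∀ x ∈ Box b, ∀ y ∈ Box b, ∀ e : E, y e < x e →
    v x + v y ≤ v (x - chi e) + v (y + chi e) ∨
    ∃ f : E, x f < y f ∧ v x + v y ≤ v (x - chi e + chi f) + v (y + chi e - chi f)

/-- M-convex set: exchange property. -/
def MConvex (B : Set (E → ℤ)) : Prop :=
  ∀ x ∈ B, ∀ y ∈ B, ∀ e : E, y e < x e →
    ∃ f : E, x f < y f ∧ x - chi e + chi f ∈ B ∧ y + chi e - chi f ∈ B

/-- `ρ` is the rank function of `B`: `ρ S = max {z(S) : z ∈ B}`. -/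
def IsRank (B : Set (E → ℤ)) (ρ : Finset E → ℤ) : Prop :=
  ∀ S : Finset E, IsGreatest ((fun z : E → ℤ => ∑ e ∈ S, z e) '' B) (ρ S)

/-- Prices `p` are packing: a choice of preferred bundles oversells no item. -/
def Packing {N : Type*} [Fintype N] (b : E → ℤ) (v : N → (E → ℤ) → ℤ) (p : E → ℝ) : Prop :=
  ∃ z : N → E → ℤ, (∀ i, z i ∈ Demand b (v i) p) ∧ ∀ e, ∑ i, z i e ≤ b e

/-- Prices `p` are covering: a choice of preferred bundles sells all items. -/
def Covering {N : Type*} [Fintype N] (b : E → ℤ) (v : N → (E → ℤ) → ℤ) (p : E → ℝ) : Prop :=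
  ∃ z : N → E → ℤ, (∀ i, z i ∈ Demand b (v i) p) ∧ ∀ e, b e ≤ ∑ i, z i e

/-- Prices `p` are Walrasian: a choice of preferred bundles exactly exhausts the supply. -/
def Walrasian {N : Type*} [Fintype N] (b : E → ℤ) (v : N → (E → ℤ) → ℤ) (p : E → ℝ) : Prop :=
  ∃ z : N → E → ℤ, (∀ i, z i ∈ Demand b (v i) p) ∧ ∀ e, ∑ i, z i e = b e

set_option linter.unusedSectionVars false

/-!
Minimal preferred bundles of an M♮-concave valuation form a finite M-convex set `B i`, and all
bundles in `B i` have the same size `ρ_i(E)`, so `ρ_i(E) − ρ_i(E∖S) = min {z(S) : z ∈ B i}`.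
This gives necessity at once. For sufficiency choose `z i ∈ B i` minimizing the total excess
`Σ_e max(Σ_i z_i(e) − b(e), 0)`, and let `g → f` when some buyer can trade a unit of `g` for a unit
of `f` inside its `B i`. A shortest walk from an overdemanded to an underdemanded item has no
shortcuts, so by the unique-matching lemma for M-convex sets every buyer can perform all its
exchanges along the walk at once; this lowers the excess. Hence no such walk exists, and the items
reachable from overdemanded ones form a set `S` closed under exchanges. Each `z i` then minimizes
`z(S)` over `B i`, so `Σ_i (ρ_i(E) − ρ_i(E∖S)) = Σ_{e ∈ S} Σ_i z_i(e) > b(S)`.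
-/

theorem chi_apply (e f : E) : chi e f = if f = e then 1 else 0 := rfl

theorem sum_chi (T : Finset E) (e : E) : ∑ f ∈ T, chi e f = if e ∈ T then 1 else 0 :=
  sum_ite_eq' T e fun _ => 1

theorem sum_add_chi_sub_chi {T : Finset E} {e f : E} (he : e ∈ T) (hf : f ∈ T) (y : E → ℤ) :
    ∑ g ∈ T, (y + chi e - chi f) g = ∑ g ∈ T, y g := by
  simp [sum_add_distrib, sum_sub_distrib, sum_chi, he, hf]

theorem sum_abs_sub_add_chi_sub_chi_lt {x y : E → ℤ} {e f : E} (he : y e < x e) (hf : x f < y f) :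
    ∑ g, |x g - (y + chi e - chi f) g| < ∑ g, |x g - y g| := by
  have hef : e ≠ f := by rintro rfl; omega
  refine sum_lt_sum (fun g _ => ?_) ⟨e, mem_univ e, ?_⟩ <;>
    simp only [Pi.add_apply, Pi.sub_apply, chi_apply] <;> split_ifs <;> grind

/-- An element of `B` with smaller `T`-sum than `x` that is `ℓ¹`-closest to `x` could be moved
closer. -/
theorem sum_le_of_exchange {B : Set (E → ℤ)} (hB : B.Finite) (T : Finset E) {x : E → ℤ}
    (hx : ∀ y ∈ B, ∀ e ∈ T, y e < x e → ∃ f ∈ T, x f < y f ∧ y + chi e - chi f ∈ B)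
    {y : E → ℤ} (hy : y ∈ B) : ∑ e ∈ T, x e ≤ ∑ e ∈ T, y e := by
  by_contra! hlt
  obtain ⟨y', ⟨hy'B, hy'T⟩, hy'min⟩ :=
    Set.exists_min_image {y' | y' ∈ B ∧ ∑ e ∈ T, y' e = ∑ e ∈ T, y e}
      (fun y' => ∑ g, |x g - y' g|) (hB.subset fun _ h => h.1) ⟨y, hy, rfl⟩
  obtain ⟨e, heT, he⟩ := exists_lt_of_sum_lt (hy'T ▸ hlt)
  obtain ⟨f, hfT, hf, hmem⟩ := hx y' hy'B e heT he
  exact (sum_abs_sub_add_chi_sub_chi_lt he hf).not_ge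
    (hy'min _ ⟨hmem, (sum_add_chi_sub_chi heT hfT y').trans hy'T⟩)

namespace MConvex

variable {B : Set (E → ℤ)}

theorem sum_le (hB : MConvex B) (hfin : B.Finite) {x y : E → ℤ} (hx : x ∈ B) (hy : y ∈ B) :
    ∑ e, x e ≤ ∑ e, y e :=
  sum_le_of_exchange hfin univ (fun y hy e _ he =>
    let ⟨f, hf, _, hmem⟩ := hB x hx y hy e he
    ⟨f, mem_univ f, hf, hmem⟩) hy

theorem sum_eq (hB : MConvex B) (hfin : B.Finite) {x y : E → ℤ} (hx : x ∈ B) (hy : y ∈ B) :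
    ∑ e, x e = ∑ e, y e :=
  (hB.sum_le hfin hx hy).antisymm (hB.sum_le hfin hy hx)

theorem sub_add_mem_trans (hB : MConvex B) {x : E → ℤ} {u₁ u₂ u₃ : E}
    (h₁₂ : x - chi u₁ + chi u₂ ∈ B) (h₂₃ : x - chi u₂ + chi u₃ ∈ B)
    (hu₁₂ : u₁ ≠ u₂) (hu₂₃ : u₂ ≠ u₃) : x - chi u₁ + chi u₃ ∈ B := by
  obtain ⟨f, hf, hmem₁, hmem₂⟩ := hB _ h₁₂ _ h₂₃ u₂ (by
    simp only [Pi.add_apply, Pi.sub_apply, chi_apply, if_neg hu₁₂.symm, if_neg hu₂₃]; simp)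
  have : f = u₃ ∨ f = u₁ := by
    by_contra! hne
    simp only [Pi.add_apply, Pi.sub_apply, chi_apply, if_neg hne.1, if_neg hne.2] at hf
    split_ifs at hf <;> omega
  rcases this with rfl | rfl
  · convert hmem₁ using 1; abel
  · convert hmem₂ using 1; abel

theorem sub_add_sub_add_mem (hB : MConvex B) {x : E → ℤ} {u v u' v' : E}
    (h : x - chi u + chi v ∈ B) (h' : x - chi u' + chi v' ∈ B) (hno : x - chi u + chi v' ∉ B)
    (hv'v : v' ≠ v) (hv'u' : v' ≠ u') : x - chi u + chi v - chi u' + chi v' ∈ B := by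
  obtain ⟨f, hf, -, hmem⟩ := hB _ h' _ h v' (by
    simp only [Pi.add_apply, Pi.sub_apply, chi_apply, if_neg hv'v, if_neg hv'u']
    split_ifs <;> omega)
  have : f = u' ∨ f = v := by
    by_contra! hne
    simp only [Pi.add_apply, Pi.sub_apply, chi_apply, if_neg hne.1, if_neg hne.2] at hf
    split_ifs at hf <;> omega
  rcases this with rfl | rfl
  · convert hmem using 1; abel
  · exact absurd (by convert hmem using 1; abel) hno

theorem sub_add_sub_add_notMem (hB : MConvex B) {x : E → ℤ} {u v u' v' : E} (hx : x ∈ B)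
    (hno : x - chi u + chi v' ∉ B) (hno' : x - chi u' + chi v' ∉ B)
    (hvu : v ≠ u) (hvu' : v ≠ u') (hvv' : v ≠ v') : x - chi u + chi v - chi u' + chi v' ∉ B := by
  intro hmem
  obtain ⟨f, hf, hmem', -⟩ := hB _ hmem _ hx v (by
    simp only [Pi.add_apply, Pi.sub_apply, chi_apply, if_neg hvu, if_neg hvu', if_neg hvv']; simp)
  have : f = u ∨ f = u' := by
    by_contra! hne
    simp only [Pi.add_apply, Pi.sub_apply, chi_apply, if_neg hne.1, if_neg hne.2] at hf
    split_ifs at hf <;> omega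
  rcases this with rfl | rfl
  · exact hno' (by convert hmem' using 1; abel)
  · exact hno (by convert hmem' using 1; abel)

/-- The unique-matching lemma: the exchanges are carried out one at a time, in increasing order
of `j`. -/
theorem add_sum_mem (hB : MConvex B) {ι : Type*} [LinearOrder ι] (u v : ι → E) (J : Finset ι)
    (huv : ∀ j ∈ J, ∀ l ∈ J, u j ≠ v l) (hv : Set.InjOn v J) :
    ∀ x ∈ B, (∀ j ∈ J, x - chi (u j) + chi (v j) ∈ B) →
      (∀ j ∈ J, ∀ l ∈ J, j < l → x - chi (u j) + chi (v l) ∉ B) →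
      x + ∑ j ∈ J, (chi (v j) - chi (u j)) ∈ B := by
  induction J using Finset.induction_on_min with
  | empty => simp
  | insert a J ha ih =>
    intro x hx hexch hshort
    have haJ : a ∉ J := fun h => lt_irrefl a (ha a h)
    have hva : ∀ j ∈ J, v j ≠ v a := fun j hj h =>
      haJ (hv (mem_insert_of_mem hj) (mem_insert_self a J) h ▸ hj)
    have hy := hexch a (mem_insert_self a J)
    have := ih (fun j hj l hl => huv j (mem_insert_of_mem hj) l (mem_insert_of_mem hl))
      (hv.mono (by simp)) _ hy
      (fun j hj => hB.sub_add_sub_add_mem hy (hexch j (mem_insert_of_mem hj))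
        (hshort a (mem_insert_self a J) j (mem_insert_of_mem hj) (ha j hj)) (hva j hj)
        (huv j (mem_insert_of_mem hj) j (mem_insert_of_mem hj)).symm)
      (fun j hj l hl hjl => hB.sub_add_sub_add_notMem hx
        (hshort a (mem_insert_self a J) l (mem_insert_of_mem hl) (ha l hl))
        (hshort j (mem_insert_of_mem hj) l (mem_insert_of_mem hl) hjl)
        (huv a (mem_insert_self a J) a (mem_insert_self a J)).symm
        (huv j (mem_insert_of_mem hj) a (mem_insert_self a J)).symm
        (hva l hl).symm)
    rw [sum_insert haJ]
    convert this using 1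
    abel

end MConvex

def IsWalk {α : Type*} (r : α → α → Prop) (a : ℕ → α) (k : ℕ) : Prop :=
  ∀ j < k, r (a j) (a (j + 1))

namespace IsWalk

variable {α : Type*} {r : α → α → Prop} {a : ℕ → α} {k : ℕ}

theorem mono (ha : IsWalk r a k) {k' : ℕ} (hk' : k' ≤ k) : IsWalk r a k' :=
  fun j hj => ha j (hj.trans_le hk')

theorem snoc (ha : IsWalk r a k) {x : α} (hx : r (a k) x) :
    IsWalk r (fun n => if n ≤ k then a n else x) (k + 1) := by
  intro j hj
  rcases Nat.lt_or_ge j k with hjk | hjk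
  · simpa [hjk.le, Nat.succ_le_of_lt hjk] using ha j hjk
  · obtain rfl : j = k := by omega
    simpa using hx

theorem shortcut (ha : IsWalk r a k) {s t : ℕ} (hst : s < t) (htk : t ≤ k)
    (hr : r (a s) (a t)) :
    ∃ a' : ℕ → α, IsWalk r a' (k - (t - s - 1)) ∧ a' 0 = a 0 ∧ a' (k - (t - s - 1)) = a k := by
  refine ⟨fun n => if n ≤ s then a n else a (n + (t - s - 1)), fun j hj => ?_, by simp, ?_⟩
  · rcases Nat.lt_trichotomy j s with hjs | rfl | hjs
    · simpa [hjs.le, Nat.succ_le_of_lt hjs] using ha j (by omega)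
    · simpa [show j + 1 + (t - j - 1) = t by omega] using hr
    · simpa [show ¬ j ≤ s by omega, show ¬ j < s by omega,
        show j + 1 + (t - s - 1) = j + (t - s - 1) + 1 by omega]
        using ha (j + (t - s - 1)) (by omega)
  · simp only [show ¬ k - (t - s - 1) ≤ s by omega, if_false]
    congr 1; omega

variable {P Q : α → Prop}

theorem le_succ_of_minimal
    (hmin : ∀ k' < k, ∀ a' : ℕ → α, P (a' 0) → Q (a' k') → ¬ IsWalk r a' k')
    (ha : IsWalk r a k) (h0 : P (a 0)) (hk : Q (a k)) {s t : ℕ}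
    (htk : t ≤ k) (hr : r (a s) (a t)) : t ≤ s + 1 := by
  by_contra! hst
  obtain ⟨a', ha', h0', hk'⟩ := ha.shortcut (by omega) htk hr
  exact hmin _ (by omega) a' (h0' ▸ h0) (hk' ▸ hk) ha'

theorem injOn_of_minimal
    (hmin : ∀ k' < k, ∀ a' : ℕ → α, P (a' 0) → Q (a' k') → ¬ IsWalk r a' k')
    (ha : IsWalk r a k) (h0 : P (a 0)) (hk : Q (a k)) :
    Set.InjOn a (Set.Iic k) := by
  have key : ∀ s t, s < t → t ≤ k → a s ≠ a t := by
    intro s t hst htk hs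
    rcases htk.lt_or_eq with htk | rfl
    · have := ha.le_succ_of_minimal hmin h0 hk htk (hs ▸ ha t htk)
      omega
    · exact hmin s hst a h0 (hs ▸ hk) (ha.mono hst.le)
  intro s hs t ht hst
  by_contra hne
  rcases Nat.lt_or_gt_of_ne hne with h | h
  · exact key s t h ht hst
  · exact key t s h hs hst.symm

end IsWalk

namespace IsRank

variable {B : Set (E → ℤ)} {ρ : Finset E → ℤ}

theorem sum_le (hρ : IsRank B ρ) {y : E → ℤ} (hy : y ∈ B) (S : Finset E) :
    ∑ e ∈ S, y e ≤ ρ S :=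
  (hρ S).2 ⟨y, hy, rfl⟩

theorem univ_sub_compl_le (hρ : IsRank B ρ) (hB : MConvex B) (hfin : B.Finite) {y : E → ℤ}
    (hy : y ∈ B) (S : Finset E) : ρ univ - ρ Sᶜ ≤ ∑ e ∈ S, y e := by
  obtain ⟨x, hx, hxρ⟩ := (hρ univ).1
  have := hB.sum_eq hfin hx hy
  have := hρ.sum_le hy Sᶜ
  have := sum_compl_add_sum S y
  simp only at hxρ
  omega

theorem univ_sub_compl_eq (hρ : IsRank B ρ) (hB : MConvex B) (hfin : B.Finite) {y : E → ℤ}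
    (hy : y ∈ B) {S : Finset E} (hmin : ∀ x ∈ B, ∑ e ∈ S, y e ≤ ∑ e ∈ S, x e) :
    ρ univ - ρ Sᶜ = ∑ e ∈ S, y e := by
  refine (hρ.univ_sub_compl_le hB hfin hy S).antisymm ?_
  obtain ⟨x, hx, hxρ⟩ := (hρ Sᶜ).1
  have := hB.sum_eq hfin hx hy
  have := hρ.sum_le hy univ
  have := hmin x hx
  have := sum_compl_add_sum S x
  have := sum_compl_add_sum S y
  simp only at hxρ
  omega

end IsRank

section Allocation

variable {N : Type*} [Fintype N]

def load (z : N → E → ℤ) (e : E) : ℤ := ∑ i, z i e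

def excess (c : E → ℤ) (z : N → E → ℤ) : ℤ := ∑ e, max (load z e - c e) 0

def ExchangeArc (B : N → Set (E → ℤ)) (z : N → E → ℤ) (g f : E) : Prop :=
  ∃ i, z i - chi g + chi f ∈ B i

variable {B : N → Set (E → ℤ)} {z : N → E → ℤ}

theorem add_sum_mem_of_walk [DecidableEq N] (hB : ∀ i, MConvex (B i)) (hz : ∀ i, z i ∈ B i)
    {a : ℕ → E} {k : ℕ} (hinj : Set.InjOn a (Set.Iic k))
    (hchord : ∀ s t, t ≤ k → ExchangeArc B z (a s) (a t) → t ≤ s + 1)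
    (w : ℕ → N) (hw : ∀ j < k, z (w j) - chi (a j) + chi (a (j + 1)) ∈ B (w j)) (i : N) :
    z i + ∑ j ∈ (range k).filter (w · = i), (chi (a (j + 1)) - chi (a j)) ∈ B i := by
  have hJ : ∀ j ∈ (range k).filter (w · = i), j < k ∧ z i - chi (a j) + chi (a (j + 1)) ∈ B i := by
    intro j hj
    rw [mem_filter, mem_range] at hj
    exact ⟨hj.1, hj.2 ▸ hw j hj.1⟩
  refine (hB i).add_sum_mem a (fun j => a (j + 1)) _ (fun j hj l hl hjl => ?_)
    (fun j hj l hl h => ?_) (z i) (hz i) (fun j hj => (hJ j hj).2) (fun j hj l hl hjl hmem => ?_)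
  · obtain rfl : j = l + 1 := hinj (Set.mem_Iic.2 (hJ j hj).1.le)
      (Set.mem_Iic.2 (hJ l hl).1) hjl
    have hne : ∀ s t, s < t → t ≤ k → a s ≠ a t := fun s t hst htk h =>
      hst.ne (hinj (Set.mem_Iic.2 (hst.le.trans htk)) (Set.mem_Iic.2 htk) h)
    have := hchord l (l + 2) (hJ _ hj).1 ⟨i, (hB i).sub_add_mem_trans (hJ l hl).2 (hJ _ hj).2
      (hne l (l + 1) (by omega) (hJ l hl).1) (hne (l + 1) (l + 2) (by omega) (hJ _ hj).1)⟩
    omega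
  · have := hinj (Set.mem_Iic.2 (hJ j hj).1) (Set.mem_Iic.2 (hJ l hl).1) h
    omega
  · have := hchord j (l + 1) (hJ l hl).1 ⟨i, hmem⟩
    omega

theorem load_add_sum [DecidableEq N] (a : ℕ → E) (k : ℕ) (w : ℕ → N) (e : E) :
    load (fun i => z i + ∑ j ∈ (range k).filter (w · = i), (chi (a (j + 1)) - chi (a j))) e =
      load z e + chi (a k) e - chi (a 0) e := by
  simp only [load, Pi.add_apply, Finset.sum_apply, Pi.sub_apply]
  rw [sum_add_distrib, sum_fiberwise (range k) w (fun j => chi (a (j + 1)) e - chi (a j) e),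
    sum_range_sub (fun j => chi (a j) e)]
  ring

theorem sum_max_sub_lt {L c : E → ℤ} {e₀ e₁ : E} (h₀ : c e₀ < L e₀) (h₁ : L e₁ < c e₁) :
    ∑ e, max (L e + chi e₁ e - chi e₀ e - c e) 0 < ∑ e, max (L e - c e) 0 := by
  have hne : e₁ ≠ e₀ := by rintro rfl; omega
  refine sum_lt_sum (fun e _ => ?_) ⟨e₀, mem_univ e₀, ?_⟩
  · simp only [chi_apply]; split_ifs <;> subst_vars <;> omega
  · simp only [chi_apply, if_neg hne.symm, if_pos]; omega

theorem exists_excess_lt_of_minimal_walk (hB : ∀ i, MConvex (B i)) (hz : ∀ i, z i ∈ B i)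
    {c : E → ℤ} {a : ℕ → E} {k : ℕ} (ha : IsWalk (ExchangeArc B z) a k)
    (h₀ : c (a 0) < load z (a 0)) (hk : load z (a k) < c (a k))
    (hmin : ∀ k' < k, ∀ a' : ℕ → E, c (a' 0) < load z (a' 0) → load z (a' k') < c (a' k') →
      ¬ IsWalk (ExchangeArc B z) a' k') :
    ∃ z' : N → E → ℤ, (∀ i, z' i ∈ B i) ∧ excess c z' < excess c z := by
  have := Classical.decEq N
  have hk0 : 0 < k := Nat.pos_of_ne_zero (by rintro rfl; omega)
  obtain ⟨i₀, -⟩ := ha 0 hk0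
  have : ∀ j, ∃ i, j < k → z i - chi (a j) + chi (a (j + 1)) ∈ B i := fun j =>
    if h : j < k then (ha j h).imp fun _ hi _ => hi else ⟨i₀, fun h' => absurd h' h⟩
  choose w hw using this
  refine ⟨fun i => z i + ∑ j ∈ (range k).filter (w · = i), (chi (a (j + 1)) - chi (a j)),
    add_sum_mem_of_walk hB hz
    (ha.injOn_of_minimal (P := fun e => c e < load z e) (Q := fun e => load z e < c e) hmin h₀ hk)
    (fun s t ht hr => ha.le_succ_of_minimal (P := fun e => c e < load z e)
      (Q := fun e => load z e < c e) hmin h₀ hk ht hr) w hw, ?_⟩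
  simp only [excess, load_add_sum]
  exact sum_max_sub_lt h₀ hk

theorem sum_rank_sub_eq_of_closed (hB : ∀ i, MConvex (B i)) (hfin : ∀ i, (B i).Finite)
    {ρ : N → Finset E → ℤ} (hρ : ∀ i, IsRank (B i) (ρ i)) (hz : ∀ i, z i ∈ B i) {S : Finset E}
    (hS : ∀ g ∈ S, ∀ f, ExchangeArc B z g f → f ∈ S) :
    ∑ i, (ρ i univ - ρ i Sᶜ) = ∑ e ∈ S, load z e := by
  rw [sum_congr rfl fun i _ => (hρ i).univ_sub_compl_eq (hB i) (hfin i) (hz i)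
    fun y hy => sum_le_of_exchange (hfin i) S (fun y hy e he hlt => ?_) hy]
  · exact sum_comm
  · obtain ⟨f, hf, hmem, hmem'⟩ := hB i (z i) (hz i) y hy e hlt
    exact ⟨f, hS e he f ⟨i, hmem⟩, hf, hmem'⟩

theorem sum_rank_sub_le_of_load_le (hB : ∀ i, MConvex (B i)) (hfin : ∀ i, (B i).Finite)
    {ρ : N → Finset E → ℤ} (hρ : ∀ i, IsRank (B i) (ρ i)) (hz : ∀ i, z i ∈ B i) {c : E → ℤ}
    (hle : ∀ e, load z e ≤ c e) (S : Finset E) :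
    ∑ i, (ρ i univ - ρ i Sᶜ) ≤ ∑ e ∈ S, c e :=
  calc ∑ i, (ρ i univ - ρ i Sᶜ)
      ≤ ∑ i, ∑ e ∈ S, z i e :=
        sum_le_sum fun i _ => (hρ i).univ_sub_compl_le (hB i) (hfin i) (hz i) S
    _ = ∑ e ∈ S, load z e := sum_comm
    _ ≤ ∑ e ∈ S, c e := sum_le_sum fun e _ => hle e

theorem exists_load_le_of_sum_rank_sub_le (hB : ∀ i, MConvex (B i)) (hfin : ∀ i, (B i).Finite)
    (hne : ∀ i, (B i).Nonempty) {ρ : N → Finset E → ℤ} (hρ : ∀ i, IsRank (B i) (ρ i))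
    {c : E → ℤ} (hcond : ∀ S : Finset E, ∑ i, (ρ i univ - ρ i Sᶜ) ≤ ∑ e ∈ S, c e) :
    ∃ z : N → E → ℤ, (∀ i, z i ∈ B i) ∧ ∀ e, load z e ≤ c e := by
  obtain ⟨z, hz, hzmin⟩ := Set.exists_min_image (Set.univ.pi B) (excess c)
    (Set.Finite.pi hfin) (Set.univ_pi_nonempty_iff.2 hne)
  replace hz : ∀ i, z i ∈ B i := fun i => hz i (Set.mem_univ i)
  refine ⟨z, hz, ?_⟩
  by_contra! ⟨e₀, he₀⟩
  classical
  by_cases hA : ∃ k a, c (a 0) < load z (a 0) ∧ IsWalk (ExchangeArc B z) a k ∧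
      load z (a k) < c (a k)
  · obtain ⟨a, h₀, ha, hk⟩ := Nat.find_spec hA
    obtain ⟨z', hz', hlt⟩ := exists_excess_lt_of_minimal_walk hB hz ha h₀ hk
      fun k' hk' a' h₀' hk'' ha' => Nat.find_min hA hk' ⟨a', h₀', ha', hk''⟩
    exact (hzmin z' fun i _ => hz' i).not_gt hlt
  push Not at hA
  let S := univ.filter fun f => ∃ k a, c (a 0) < load z (a 0) ∧
    IsWalk (ExchangeArc B z) a k ∧ a k = f
  have hS : ∀ g ∈ S, ∀ f, ExchangeArc B z g f → f ∈ S := by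
    simp only [S, mem_filter, mem_univ, true_and]
    rintro g ⟨k, a, h₀, ha, rfl⟩ f hf
    exact ⟨k + 1, _, by simpa using h₀, ha.snoc hf, by simp⟩
  have hcS : ∀ e ∈ S, c e ≤ load z e := by
    simp only [S, mem_filter, mem_univ, true_and]
    rintro _ ⟨k, a, h₀, ha, rfl⟩
    exact hA k a h₀ ha
  have he₀S : e₀ ∈ S := by
    simpa [S] using ⟨0, fun _ => e₀, he₀, fun _ h => absurd h (Nat.not_lt_zero _), rfl⟩
  have := hcond S
  rw [sum_rank_sub_eq_of_closed hB hfin hρ hz hS] at this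
  exact this.not_gt (sum_lt_sum hcS ⟨e₀, he₀S, he₀⟩)

theorem exists_load_le_iff (hB : ∀ i, MConvex (B i)) (hfin : ∀ i, (B i).Finite)
    (hne : ∀ i, (B i).Nonempty) {ρ : N → Finset E → ℤ} (hρ : ∀ i, IsRank (B i) (ρ i))
    (c : E → ℤ) :
    (∃ z : N → E → ℤ, (∀ i, z i ∈ B i) ∧ ∀ e, load z e ≤ c e) ↔
      ∀ S : Finset E, ∑ i, (ρ i univ - ρ i Sᶜ) ≤ ∑ e ∈ S, c e :=
  ⟨fun ⟨_, hz, hle⟩ => sum_rank_sub_le_of_load_le hB hfin hρ hz hle,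
    exists_load_le_of_sum_rank_sub_le hB hfin hne hρ⟩

end Allocation

def MNatConvex (D : Set (E → ℤ)) : Prop :=
  ∀ x ∈ D, ∀ y ∈ D, ∀ e : E, y e < x e →
    (x - chi e ∈ D ∧ y + chi e ∈ D) ∨
      ∃ f : E, x f < y f ∧ x - chi e + chi f ∈ D ∧ y + chi e - chi f ∈ D

section Minimal

variable {D : Set (E → ℤ)} {z : E → ℤ}

theorem sub_chi_notMem_of_minimal (hz : Minimal (· ∈ D) z) (e : E) : z - chi e ∉ D := fun h => by
  have := hz.2 h (fun g => by simp [chi_apply]; split_ifs <;> omega) e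
  simp [chi_apply] at this

theorem minimal_of_sum_le (hz : z ∈ D) (hsum : ∀ y ∈ D, ∑ e, z e ≤ ∑ e, y e) :
    Minimal (· ∈ D) z :=
  ⟨hz, fun y hy hyz e => ((sum_eq_sum_iff_of_le fun e _ => hyz e).1
    ((sum_le_sum fun e _ => hyz e).antisymm (hsum y hy)) e (mem_univ e)).ge⟩

theorem MNatConvex.sum_le_of_minimal (hD : MNatConvex D) (hfin : D.Finite)
    (hz : Minimal (· ∈ D) z) {y : E → ℤ} (hy : y ∈ D) : ∑ e, z e ≤ ∑ e, y e := by
  refine sum_le_of_exchange hfin univ (fun y hy e _ he => ?_) hy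
  rcases hD z hz.1 y hy e he with ⟨hmem, -⟩ | ⟨f, hf, -, hmem⟩
  · exact absurd hmem (sub_chi_notMem_of_minimal hz e)
  · exact ⟨f, mem_univ f, hf, hmem⟩

theorem MNatConvex.mConvex_minimal (hD : MNatConvex D) (hfin : D.Finite) :
    MConvex {z | Minimal (· ∈ D) z} := by
  intro x hx y hy e he
  rcases hD x hx.1 y hy.1 e he with ⟨hmem, -⟩ | ⟨f, hf, hx', hy'⟩
  · exact absurd hmem (sub_chi_notMem_of_minimal hx e)
  refine ⟨f, hf, minimal_of_sum_le hx' fun w hw => ?_, minimal_of_sum_le hy' fun w hw => ?_⟩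
  · rw [show x - chi e + chi f = x + chi f - chi e by abel,
      sum_add_chi_sub_chi (mem_univ f) (mem_univ e)]
    exact hD.sum_le_of_minimal hfin hx hw
  · rw [sum_add_chi_sub_chi (mem_univ e) (mem_univ f)]
    exact hD.sum_le_of_minimal hfin hy hw

end Minimal

section Demand

variable {b : E → ℤ} {v : (E → ℤ) → ℤ} {p : E → ℝ}

theorem box_eq_Icc (b : E → ℤ) : Box b = Set.Icc 0 b := by
  ext z
  simp [Box, Pi.le_def, forall_and]

theorem mem_box_of_between {x y w : E → ℤ} (hx : x ∈ Box b) (hy : y ∈ Box b)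
    (hw : ∀ g, min (x g) (y g) ≤ w g ∧ w g ≤ max (x g) (y g)) : w ∈ Box b := fun g => by
  have := hx g
  have := hy g
  have := hw g
  omega

theorem box_finite (b : E → ℤ) : (Box b).Finite :=
  box_eq_Icc b ▸ Set.finite_Icc 0 b

theorem demand_finite : (Demand b v p).Finite :=
  (box_finite b).subset fun _ h => h.1

theorem demand_nonempty (hb : 0 ≤ b) : (Demand b v p).Nonempty := by
  obtain ⟨z, hz, hmax⟩ := Set.exists_max_image (Box b) (util v p)
    (box_finite b) ⟨0, box_eq_Icc b ▸ Set.left_mem_Icc.2 hb⟩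
  exact ⟨z, hz, hmax⟩

/-- Prices are linear, so the swap changes total utility exactly as it changes total value. -/
theorem demand_exchange {x y x' y' : E → ℤ} (hx : x ∈ Demand b v p) (hy : y ∈ Demand b v p)
    (hx' : x' ∈ Box b) (hy' : y' ∈ Box b) (hsum : x' + y' = x + y)
    (hv : v x + v y ≤ v x' + v y') : x' ∈ Demand b v p ∧ y' ∈ Demand b v p := by
  have hprice : ∑ e, p e * (x' e : ℝ) + ∑ e, p e * (y' e : ℝ) =
      ∑ e, p e * (x e : ℝ) + ∑ e, p e * (y e : ℝ) := by
    simp only [← sum_add_distrib, ← mul_add]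
    congr! 2 with e
    exact_mod_cast congrFun hsum e
  have hv' : (v x : ℝ) + v y ≤ v x' + v y' := by exact_mod_cast hv
  have h₁ := hx.2 x' hx'
  have h₂ := hy.2 y' hy'
  simp only [util] at h₁ h₂
  refine ⟨⟨hx', fun w hw => (hx.2 w hw).trans ?_⟩, ⟨hy', fun w hw => (hy.2 w hw).trans ?_⟩⟩ <;>
    simp only [util] <;> linarith

theorem mNatConvex_demand (hv : MNatConcave b v) : MNatConvex (Demand b v p) := by
  intro x hx y hy e he
  have hbox := fun w => mem_box_of_between (w := w) hx.1 hy.1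
  rcases hv x hx.1 y hy.1 e he with h | ⟨f, hf, h⟩
  · refine .inl (demand_exchange hx hy (hbox _ fun g => ?_) (hbox _ fun g => ?_) (by abel) h) <;>
      simp only [Pi.add_apply, Pi.sub_apply, chi_apply] <;> split_ifs <;> subst_vars <;> omega
  · refine .inr ⟨f, hf, demand_exchange hx hy (hbox _ fun g => ?_) (hbox _ fun g => ?_)
      (by abel) h⟩ <;>
      simp only [Pi.add_apply, Pi.sub_apply, chi_apply] <;> split_ifs <;> subst_vars <;> omega

theorem mem_minDemand_iff {z : E → ℤ} : z ∈ MinDemand b v p ↔ Minimal (· ∈ Demand b v p) z := by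
  refine and_congr_right fun _ => forall₂_congr fun y hy => imp_congr_right fun hyz => ?_
  exact ⟨fun h => h ▸ le_rfl, le_antisymm hyz⟩

theorem minDemand_finite : (MinDemand b v p).Finite :=
  demand_finite.subset fun _ h => h.1

theorem minDemand_nonempty (hb : 0 ≤ b) : (MinDemand b v p).Nonempty := by
  obtain ⟨z, hz⟩ := demand_nonempty (v := v) (p := p) hb
  obtain ⟨z', -, hz'⟩ := demand_finite.exists_le_minimal hz
  exact ⟨z', mem_minDemand_iff.2 hz'⟩

theorem mConvex_minDemand (hv : MNatConcave b v) : MConvex (MinDemand b v p) := by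
  convert (mNatConvex_demand hv).mConvex_minimal demand_finite using 1
  ext z
  exact mem_minDemand_iff

theorem packing_iff_exists_minDemand {N : Type*} [Fintype N] {v : N → (E → ℤ) → ℤ} :
    Packing b v p ↔ ∃ z : N → E → ℤ, (∀ i, z i ∈ MinDemand b (v i) p) ∧ ∀ e, load z e ≤ b e := by
  constructor
  · rintro ⟨z, hz, hle⟩
    choose z' hz'le hz' using fun i => demand_finite.exists_le_minimal (hz i)
    exact ⟨z', fun i => mem_minDemand_iff.2 (hz' i),
      fun e => (sum_le_sum fun i _ => hz'le i e).trans (hle e)⟩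
  · rintro ⟨z, hz, hle⟩
    exact ⟨z, fun i => (hz i).1, hle⟩

end Demand

theorem stmt5_general {N : Type*} [Fintype N] (b : E → ℤ) (hb : 0 ≤ b)
    (v : N → (E → ℤ) → ℤ) (hsgs : ∀ i, MNatConcave b (v i)) (p : E → ℝ)
    (ρ : N → Finset E → ℤ) (hρ : ∀ i, IsRank (MinDemand b (v i) p) (ρ i)) :
    Packing b v p ↔
      ∀ S : Finset E, ∑ i, (ρ i univ - ρ i Sᶜ) ≤ ∑ e ∈ S, b e := by
  rw [packing_iff_exists_minDemand]
  exact exists_load_le_iff (fun i => mConvex_minDemand (hsgs i)) (fun _ => minDemand_finite)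
    (fun _ => minDemand_nonempty hb) hρ b

/-- With strong gross substitutes valuations, prices are packing iff no set is
overdemanded: `Σ_i (ρ̌_i(E) − ρ̌_i(E∖S)) ≤ b(S)` for all `S`. -/
theorem stmt5 {N : Type*} [Fintype N] (b : E → ℤ) (hb : 0 ≤ b)
    (v : N → (E → ℤ) → ℤ) (hsgs : ∀ i, MNatConcave b (v i))
    (hmono : ∀ i, ∀ x ∈ Box b, ∀ y ∈ Box b, x ≤ y → v i x ≤ v i y)
    (p : E → ℝ) (hp : 0 ≤ p)
    (ρ : N → Finset E → ℤ) (hρ : ∀ i, IsRank (MinDemand b (v i) p) (ρ i)) :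
    Packing b v p ↔
      ∀ S : Finset E, ∑ i, (ρ i univ - ρ i Sᶜ) ≤ ∑ e ∈ S, b e :=
  stmt5_general b hb v hsgs p ρ hρ
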